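/- In the lower-bound instance for the non-adaptive algorithm: if for each of t vertices the algorithm queries only 2 incident edges, each existing independently with probability p = 1/2, then the expected number of these vertices left with no existing queried edge is at least t/4; consequently the expected matching size produced is at most (5/4)·t while the omniscient optimum is at least (3/2)·t − o(t), giving approximation ratio at most 5/6 + o(1). -/

import Mathlib

/-!
Every vertex of `B2 ∪ C2` lies on exactly two queried edges, so it is isolated with
probability `1/4`. The queried edges form `m` vertex-disjoint hexagons, and a matching of a
hexagon has three edges only if one of its two perfect matchings is present, which happens with
probability `1/8` each; so the expected matching size is at most `(2 + 1/8 + 1/8) m ≤ (5/4) t`.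
In the full graph, keep the `k` present `B–C` edges and match greedily `A` into the `2m - k`
free vertices of `B`, and `D` into those of `C`: greedy loses only `O(1)` in expectation, and
since `k` is binomial with mean `m` and variance `m/2`, `min(m, 2m - k)` is `m - O(√m)` on
average. This gives `3m - o(m) = (3/2) t - o(t)`.
-/

open Finset

/-- Vertex set of the lower-bound instance with `t = m + m`: the four parts are
`A` (size `m`), `B` (size `m+m`), `C` (size `m+m`) and `D` (size `m`);
`B1, C1` are the index ranges `[0,m)` and `B2, C2` the index ranges `[m, m+m)`. -/
abbrev Vt (m : ℕ) := (Fin m ⊕ Fin (m + m)) ⊕ (Fin (m + m) ⊕ Fin m)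

/-- The full edge set: a perfect matching between `B` and `C`, a complete bipartite graph
between `A` and `B`, and a complete bipartite graph between `C` and `D`. -/
def graphE (m : ℕ) : Finset (Finset (Vt m)) :=
  (Finset.univ.image fun i : Fin (m + m) =>
    ({Sum.inl (Sum.inr i), Sum.inr (Sum.inl i)} : Finset (Vt m))) ∪
  (Finset.univ.image fun q : Fin m × Fin (m + m) =>
    ({Sum.inl (Sum.inl q.1), Sum.inl (Sum.inr q.2)} : Finset (Vt m))) ∪
  (Finset.univ.image fun q : Fin (m + m) × Fin m =>
    ({Sum.inr (Sum.inl q.1), Sum.inr (Sum.inr q.2)} : Finset (Vt m)))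

/-- The edges queried by the (adversarially tie-broken) non-adaptive algorithm: all `B–C`
perfect matching edges, a perfect matching `A ↔ B1`, a perfect matching `A ↔ B2`,
a perfect matching `C1 ↔ D` and a perfect matching `C2 ↔ D`; in particular every vertex of
`B2 ∪ C2` has exactly `2` incident queried edges. -/
def Wq (m : ℕ) : Finset (Finset (Vt m)) :=
  (Finset.univ.image fun i : Fin (m + m) =>
    ({Sum.inl (Sum.inr i), Sum.inr (Sum.inl i)} : Finset (Vt m))) ∪
  (Finset.univ.image fun i : Fin m =>
    ({Sum.inl (Sum.inl i), Sum.inl (Sum.inr (Fin.castAdd m i))} : Finset (Vt m))) ∪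
  (Finset.univ.image fun i : Fin m =>
    ({Sum.inl (Sum.inl i), Sum.inl (Sum.inr (Fin.natAdd m i))} : Finset (Vt m))) ∪
  (Finset.univ.image fun i : Fin m =>
    ({Sum.inr (Sum.inl (Fin.castAdd m i)), Sum.inr (Sum.inr i)} : Finset (Vt m))) ∪
  (Finset.univ.image fun i : Fin m =>
    ({Sum.inr (Sum.inl (Fin.natAdd m i)), Sum.inr (Sum.inr i)} : Finset (Vt m)))

/-- The `t = m + m` vertices of `B2 ∪ C2` (the bottom halves of `B` and `C`). -/
def B2C2 (m : ℕ) : Finset (Vt m) :=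
  (Finset.univ.image fun i : Fin m => (Sum.inl (Sum.inr (Fin.natAdd m i)) : Vt m)) ∪
  (Finset.univ.image fun i : Fin m => (Sum.inr (Sum.inl (Fin.natAdd m i)) : Vt m))

/-- `matchNum F` is the maximum matching size of the graph with edge set `F`. -/
def matchNum {V : Type*} [DecidableEq V] (F : Finset (Finset V)) : ℕ :=
  (F.powerset.filter (fun M => ∀ e ∈ M, ∀ f ∈ M, e ≠ f → e ∩ f = ∅)).sup Finset.card

/-- Expected maximum matching size of the random subgraph of `G` with edge probability `p`. -/
noncomputable def expMatch {V : Type*} [DecidableEq V] (G : Finset (Finset V)) (p : ℝ) : ℝ :=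
  ∑ S ∈ G.powerset, p ^ S.card * (1 - p) ^ (G.card - S.card) * (matchNum S : ℝ)

open scoped BigOperators

lemma Finset.pair_eq_pair_iff {α : Type*} [DecidableEq α] {x y z w : α} :
    ({x, y} : Finset α) = {z, w} ↔ x = z ∧ y = w ∨ x = w ∧ y = z := by
  rw [← coe_inj, coe_pair, coe_pair, Set.pair_eq_pair_iff]

section Matching

variable {V : Type*} [DecidableEq V]

def IsMatching (M : Finset (Finset V)) : Prop :=
  ∀ e ∈ M, ∀ f ∈ M, e ≠ f → Disjoint e f

lemma le_matchNum {M F : Finset (Finset V)} (hMF : M ⊆ F) (hM : IsMatching M) :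
    #M ≤ matchNum F :=
  le_sup (f := card) <| mem_filter.2 ⟨mem_powerset.2 hMF, fun e he f hf hef =>
    disjoint_iff_inter_eq_empty.1 (hM e he f hf hef)⟩

lemma exists_isMatching_card_eq_matchNum (F : Finset (Finset V)) :
    ∃ M ⊆ F, IsMatching M ∧ #M = matchNum F := by
  have hne : (F.powerset.filter fun M => ∀ e ∈ M, ∀ f ∈ M, e ≠ f → e ∩ f = ∅).Nonempty :=
    ⟨∅, by simp⟩
  obtain ⟨M, hM, hcard⟩ := exists_mem_eq_sup _ hne card
  rw [mem_filter, mem_powerset] at hM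
  exact ⟨M, hM.1, fun e he f hf hef => disjoint_iff_inter_eq_empty.2 (hM.2 e he f hf hef),
    hcard.symm⟩

lemma matchNum_mono {F G : Finset (Finset V)} (h : F ⊆ G) : matchNum F ≤ matchNum G := by
  obtain ⟨M, hMF, hM, hcard⟩ := exists_isMatching_card_eq_matchNum F
  exact hcard ▸ le_matchNum (hMF.trans h) hM

lemma matchNum_add_one_le_matchNum_insert {F : Finset (Finset V)} {e : Finset V}
    (he : e.Nonempty) (heF : ∀ f ∈ F, Disjoint e f) : matchNum F + 1 ≤ matchNum (insert e F) := by
  obtain ⟨M, hMF, hM, hcard⟩ := exists_isMatching_card_eq_matchNum F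
  have heM : e ∉ M := fun h => he.ne_empty (disjoint_self.1 (heF e (hMF h)))
  rw [← hcard, ← card_insert_of_notMem heM]
  refine le_matchNum (insert_subset_insert e hMF) fun f hf g hg hfg => ?_
  rcases mem_insert.1 hf with rfl | hfM
  · rcases mem_insert.1 hg with rfl | hgM
    exacts [absurd rfl hfg, heF g (hMF hgM)]
  · rcases mem_insert.1 hg with rfl | hgM
    exacts [(heF f (hMF hfM)).symm, hM f hfM g hgM hfg]

lemma IsMatching.union {M N : Finset (Finset V)} (hM : IsMatching M) (hN : IsMatching N)
    (hMN : ∀ e ∈ M, ∀ f ∈ N, Disjoint e f) : IsMatching (M ∪ N) := by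
  intro e he f hf hef
  rcases mem_union.1 he with he | he <;> rcases mem_union.1 hf with hf | hf
  exacts [hM e he f hf hef, hMN e he f hf, (hMN f hf e he).symm, hN e he f hf hef]

lemma matchNum_add_matchNum_le {X Y : Finset (Finset V)} (hX : ∅ ∉ X)
    (hXY : ∀ e ∈ X, ∀ f ∈ Y, Disjoint e f) : matchNum X + matchNum Y ≤ matchNum (X ∪ Y) := by
  obtain ⟨M, hMX, hM, hMcard⟩ := exists_isMatching_card_eq_matchNum X
  obtain ⟨N, hNY, hN, hNcard⟩ := exists_isMatching_card_eq_matchNum Y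
  have hMN : ∀ e ∈ M, ∀ f ∈ N, Disjoint e f := fun e he f hf => hXY e (hMX he) f (hNY hf)
  have hdisj : Disjoint M N := disjoint_left.2 fun e he heN => by
    have he_empty : e = ∅ := disjoint_self.1 (hMN e he e heN)
    exact hX (he_empty ▸ hMX he)
  rw [← hMcard, ← hNcard, ← card_union_of_disjoint hdisj]
  exact le_matchNum (union_subset_union hMX hNY) (hM.union hN hMN)

lemma matchNum_biUnion_le {ι : Type*} (s : Finset ι) (H : ι → Finset (Finset V))
    {F : Finset (Finset V)} (hF : F ⊆ s.biUnion H) :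
    matchNum F ≤ ∑ i ∈ s, matchNum (F ∩ H i) := by
  obtain ⟨M, hMF, hM, hcard⟩ := exists_isMatching_card_eq_matchNum F
  rw [← hcard]
  have hMeq : M = s.biUnion fun i => M ∩ H i := by
    ext e
    simp only [mem_biUnion, mem_inter]
    exact ⟨fun he => (mem_biUnion.1 (hF (hMF he))).imp fun i hi => ⟨hi.1, he, hi.2⟩,
      fun ⟨_, _, he, _⟩ => he⟩
  calc #M = #(s.biUnion fun i => M ∩ H i) := congrArg card hMeq
    _ ≤ ∑ i ∈ s, #(M ∩ H i) := card_biUnion_le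
    _ ≤ ∑ i ∈ s, matchNum (F ∩ H i) := sum_le_sum fun i _ =>
      le_matchNum (inter_subset_inter hMF subset_rfl)
        fun e he f hf => hM e (mem_inter.1 he).1 f (mem_inter.1 hf).1

end Matching

section UniformSubset

variable {α : Type*}

lemma sum_powerset_half_weight (s : Finset α) (f : Finset α → ℝ) :
    ∑ S ∈ s.powerset, (1 / 2 : ℝ) ^ #S * (1 / 2) ^ (#s - #S) * f S = 𝔼 S ∈ s.powerset, f S := by
  have hweight : ∀ S ∈ s.powerset, (1 / 2 : ℝ) ^ #S * (1 / 2) ^ (#s - #S) * f S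
      = f S / #s.powerset := fun S hS => by
    rw [card_powerset, ← pow_add, one_div_pow,
      Nat.add_sub_cancel' (card_le_card (mem_powerset.1 hS))]
    push_cast
    ring
  rw [sum_congr rfl hweight, ← sum_div, expect_eq_sum_div_card]

variable [DecidableEq α]

lemma expect_powerset_union {M : Type*} [AddCommMonoid M] [Module ℚ≥0 M] {s t : Finset α}
    (h : Disjoint s t) (f : Finset α → M) :
    𝔼 S ∈ (s ∪ t).powerset, f S = 𝔼 u ∈ s.powerset, 𝔼 v ∈ t.powerset, f (u ∪ v) := by
  rw [← expect_product']
  refine expect_nbij' (fun S => (S ∩ s, S ∩ t)) (fun p => p.1 ∪ p.2) ?_ ?_ ?_ ?_ ?_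
  · simp
  · simp only [mem_product, mem_powerset]
    exact fun p hp => union_subset_union hp.1 hp.2
  · intro S hS
    rw [← inter_union_distrib_left, inter_eq_left.2 (mem_powerset.1 hS)]
  · simp only [mem_product, mem_powerset]
    rintro ⟨u, v⟩ ⟨hu, hv⟩
    simp [union_inter_distrib_right, inter_eq_left.2 hu, inter_eq_left.2 hv,
      disjoint_iff_inter_eq_empty.1 (h.mono_left hu),
      disjoint_iff_inter_eq_empty.1 (h.symm.mono_left hv)]
  · intro S hS
    rw [← inter_union_distrib_left, inter_eq_left.2 (mem_powerset.1 hS)]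

lemma expect_powerset_inter {M : Type*} [AddCommMonoid M] [Module ℚ≥0 M] {s t : Finset α}
    (h : t ⊆ s) (f : Finset α → M) :
    𝔼 S ∈ s.powerset, f (S ∩ t) = 𝔼 u ∈ t.powerset, f u := by
  rw [← union_sdiff_of_subset h, expect_powerset_union disjoint_sdiff]
  refine expect_congr rfl fun u hu => ?_
  have hfu : ∀ v ∈ (s \ t).powerset, f ((u ∪ v) ∩ t) = f u := fun v hv => by
    rw [union_inter_distrib_right, inter_eq_left.2 (mem_powerset.1 hu),
      disjoint_iff_inter_eq_empty.1 (disjoint_sdiff_self_left.mono_left (mem_powerset.1 hv)),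
      union_empty]
  rw [expect_congr rfl hfu, expect_const (powerset_nonempty _)]

lemma expect_powerset_ite_eq {K : Type*} [Semifield K] [CharZero K] {s u : Finset α}
    (hu : u ⊆ s) : 𝔼 S ∈ s.powerset, (if S = u then (1 : K) else 0) = (2 ^ #s)⁻¹ := by
  rw [expect_eq_sum_div_card, sum_ite_eq' _ _ (fun _ => (1 : K)), if_pos (mem_powerset.2 hu),
    card_powerset]
  push_cast
  exact one_div _

lemma expect_powerset_ite_eq_empty {K : Type*} [Field K] [CharZero K] (s : Finset α) :
    𝔼 S ∈ s.powerset, (if S = ∅ then 0 else 1 : K) = 1 - (2 ^ #s)⁻¹ := by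
  calc 𝔼 S ∈ s.powerset, (if S = ∅ then 0 else 1 : K)
      = 𝔼 S ∈ s.powerset, (1 - if S = ∅ then 1 else 0 : K) :=
        expect_congr rfl fun S _ => by split_ifs <;> norm_num
    _ = 1 - (2 ^ #s)⁻¹ := by
        rw [expect_sub_distrib, expect_const (powerset_nonempty s),
          expect_powerset_ite_eq (empty_subset s)]

lemma expect_powerset_ite_inter_eq {K : Type*} [Semifield K] [CharZero K] {s t u : Finset α}
    (ht : t ⊆ s) (hu : u ⊆ t) :
    𝔼 S ∈ s.powerset, (if S ∩ t = u then (1 : K) else 0) = (2 ^ #t)⁻¹ := by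
  rw [expect_powerset_inter ht (fun v => if v = u then (1 : K) else 0), expect_powerset_ite_eq hu]

lemma expect_powerset_ite_subset {K : Type*} [Semifield K] [CharZero K] {s t : Finset α}
    (ht : t ⊆ s) : 𝔼 S ∈ s.powerset, (if t ⊆ S then (1 : K) else 0) = (2 ^ #t)⁻¹ := by
  refine (expect_congr rfl fun S _ => ?_).trans (expect_powerset_ite_inter_eq ht subset_rfl)
  exact if_congr inter_eq_right.symm rfl rfl

lemma expect_powerset_insert {K : Type*} [Semifield K] [CharZero K] {s : Finset α} {a : α}
    (ha : a ∉ s) (f : Finset α → K) :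
    𝔼 S ∈ (insert a s).powerset, f S
      = (𝔼 S ∈ s.powerset, f S + 𝔼 S ∈ s.powerset, f (insert a S)) / 2 := by
  simp only [expect_eq_sum_div_card, sum_powerset_insert ha, card_powerset,
    card_insert_of_notMem ha, pow_succ]
  push_cast
  field_simp

lemma expect_powerset_card {K : Type*} [Semifield K] [CharZero K] (s : Finset α) :
    𝔼 S ∈ s.powerset, (#S : K) = #s / 2 := by
  induction s using Finset.induction_on with
  | empty => simp
  | insert a s ha ih =>
    have hcard : ∀ S ∈ s.powerset, (#(insert a S) : K) = #S + 1 := fun S hS => by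
      rw [card_insert_of_notMem fun haS => ha (mem_powerset.1 hS haS), Nat.cast_succ]
    rw [expect_powerset_insert ha, expect_congr rfl hcard, expect_add_distrib,
      expect_const (powerset_nonempty s), ih, card_insert_of_notMem ha, Nat.cast_succ]
    ring

lemma expect_powerset_card_sub_sq {K : Type*} [Field K] [CharZero K] (s : Finset α) :
    𝔼 S ∈ s.powerset, ((#S : K) - #s / 2) ^ 2 = (#s : K) / 4 := by
  induction s using Finset.induction_on with
  | empty => simp
  | insert a s ha ih =>
    have hpair : ∀ S ∈ s.powerset,
        ((#S : K) - #(insert a s) / 2) ^ 2 + ((#(insert a S) : K) - #(insert a s) / 2) ^ 2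
          = 2 * ((#S : K) - #s / 2) ^ 2 + 1 / 2 := fun S hS => by
      rw [card_insert_of_notMem fun haS => ha (mem_powerset.1 hS haS),
        card_insert_of_notMem ha]
      push_cast
      ring
    rw [expect_powerset_insert ha, ← expect_add_distrib, expect_congr rfl hpair,
      expect_add_distrib, ← mul_expect, ih, expect_const (powerset_nonempty s),
      card_insert_of_notMem ha, Nat.cast_succ]
    ring

lemma expect_powerset_ite_forall_notMem {K : Type*} [Semifield K] [CharZero K]
    (G : Finset (Finset α)) (v : α) :
    𝔼 S ∈ G.powerset, (if ∀ e ∈ S, v ∉ e then (1 : K) else 0) = (2 ^ #(G.filter (v ∈ ·)))⁻¹ := by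
  refine (expect_congr rfl fun S hS => if_congr ?_ rfl rfl).trans
    (expect_powerset_ite_inter_eq (filter_subset _ G) (empty_subset _))
  rw [← not_nonempty_iff_eq_empty]
  simp only [Finset.Nonempty, mem_inter, mem_filter, not_exists, not_and]
  exact ⟨fun h e heS _ hve => h e heS hve, fun h e heS hve => h e heS (mem_powerset.1 hS heS) hve⟩

lemma expect_card_filter_forall_notMem (G : Finset (Finset α)) (X : Finset α) :
    𝔼 S ∈ G.powerset, (#(X.filter fun v => ∀ e ∈ S, v ∉ e) : ℝ)
      = ∑ v ∈ X, (2 ^ #(G.filter (v ∈ ·)))⁻¹ := by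
  simp_rw [natCast_card_filter]
  rw [expect_sum_comm]
  exact sum_congr rfl fun v _ => expect_powerset_ite_forall_notMem G v

lemma expMatch_half (G : Finset (Finset α)) :
    expMatch G (1 / 2) = 𝔼 S ∈ G.powerset, (matchNum S : ℝ) := by
  rw [expMatch, show (1 - 1 / 2 : ℝ) = 1 / 2 by norm_num, sum_powerset_half_weight]

end UniformSubset

section Bipartite

variable {V : Type*} [DecidableEq V]

def bipartiteEdges (X Y : Finset V) : Finset (Finset V) :=
  (X ×ˢ Y).image fun p => {p.1, p.2}

lemma mem_bipartiteEdges {X Y : Finset V} {e : Finset V} :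
    e ∈ bipartiteEdges X Y ↔ ∃ x ∈ X, ∃ y ∈ Y, {x, y} = e := by
  simp [bipartiteEdges, and_assoc]

lemma bipartiteEdges_mono {X X' Y Y' : Finset V} (hX : X ⊆ X') (hY : Y ⊆ Y') :
    bipartiteEdges X Y ⊆ bipartiteEdges X' Y' :=
  image_subset_image (product_subset_product hX hY)

lemma bipartiteEdges_insert (x : V) (X Y : Finset V) :
    bipartiteEdges (insert x X) Y = Y.image (fun y => {x, y}) ∪ bipartiteEdges X Y := by
  rw [bipartiteEdges, bipartiteEdges, insert_eq, union_product, image_union, singleton_product,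
    map_eq_image, image_image]
  rfl

lemma pair_injective (x : V) : Function.Injective fun y : V => ({x, y} : Finset V) := by
  intro y y' h
  rcases pair_eq_pair_iff.1 h with ⟨-, h⟩ | ⟨h₁, h₂⟩
  exacts [h, h₂.trans h₁]

/-- `∑ i < min n r, (1 - 2⁻⁽ʳ⁻ⁱ⁾)` in closed form: when the left vertices of a random
bipartite graph are matched greedily, the `i`-th one still has `r - i` candidate neighbours,
one of which is present with probability `1 - 2⁻⁽ʳ⁻ⁱ⁾`. -/
noncomputable def greedyBound (n r : ℕ) : ℝ := ((min n r : ℕ) : ℝ) - (2 ^ min n r - 1) / 2 ^ r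

lemma greedyBound_zero_left (r : ℕ) : greedyBound 0 r = 0 := by simp [greedyBound]

lemma greedyBound_zero_right (n : ℕ) : greedyBound n 0 = 0 := by simp [greedyBound]

lemma greedyBound_succ_succ (n r : ℕ) :
    greedyBound (n + 1) (r + 1) = 1 - (2 ^ (r + 1))⁻¹ + greedyBound n r := by
  simp only [greedyBound, Nat.add_min_add_right]
  push_cast
  field_simp
  ring

lemma min_sub_one_le_greedyBound (n r : ℕ) : ((min n r : ℕ) : ℝ) - 1 ≤ greedyBound n r := by
  have hpow : (2 : ℝ) ^ min n r ≤ 2 ^ r := pow_le_pow_right₀ one_le_two (min_le_right _ _)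
  have : (2 ^ min n r - 1 : ℝ) / 2 ^ r ≤ 1 := div_le_one_of_le₀ (by linarith) (by positivity)
  rw [greedyBound]
  linarith

lemma disjoint_image_pair_bipartiteEdges {x : V} {X Y : Finset V} (hxX : x ∉ X) (hxY : x ∉ Y) :
    Disjoint (Y.image fun y => {x, y}) (bipartiteEdges X Y) := by
  refine disjoint_left.2 fun e he he' => ?_
  obtain ⟨y, -, rfl⟩ := mem_image.1 he
  obtain ⟨x', hx', y', hy', hxy⟩ := mem_bipartiteEdges.1 he'
  have : x ∈ ({x', y'} : Finset V) := hxy ▸ mem_insert_self x {y}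
  simp only [mem_insert, mem_singleton] at this
  rcases this with rfl | rfl
  exacts [hxX hx', hxY hy']

/-- The witness is `y` with `{x, y} ∈ T` if `T ≠ ∅`, and any `y` otherwise. -/
lemma exists_matchNum_inter_bipartiteEdges_erase_add_le {x : V} {X Y : Finset V}
    {T : Finset (Finset V)} (hxX : x ∉ X) (hxY : x ∉ Y) (hXY : Disjoint X Y) (hY : Y.Nonempty)
    (hT : T ⊆ Y.image fun y => {x, y}) :
    ∃ y ∈ Y, ∀ S : Finset (Finset V),
      matchNum (S ∩ bipartiteEdges X (Y.erase y)) + (if T = ∅ then 0 else 1)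
        ≤ matchNum (T ∪ S) := by
  obtain rfl | ⟨e, he⟩ := T.eq_empty_or_nonempty
  · obtain ⟨y₀, hy₀⟩ := hY
    exact ⟨y₀, hy₀, fun S => by simpa using matchNum_mono inter_subset_left⟩
  obtain ⟨y, hy, rfl⟩ := mem_image.1 (hT he)
  refine ⟨y, hy, fun S => ?_⟩
  have hfree : ∀ f ∈ S ∩ bipartiteEdges X (Y.erase y), Disjoint {x, y} f := by
    intro f hf
    obtain ⟨x', hx', y', hy', rfl⟩ := mem_bipartiteEdges.1 (mem_inter.1 hf).2
    have hyX : y ∉ X := disjoint_right.1 hXY hy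
    simp only [disjoint_insert_left, disjoint_insert_right, disjoint_singleton, mem_insert,
      mem_singleton]
    grind
  have hsub : insert {x, y} (S ∩ bipartiteEdges X (Y.erase y)) ⊆ T ∪ S :=
    insert_subset (mem_union_left S he) (inter_subset_left.trans subset_union_right)
  rw [if_neg (ne_empty_of_mem he)]
  exact (matchNum_add_one_le_matchNum_insert (insert_nonempty x {y}) hfree).trans
    (matchNum_mono hsub)

theorem greedyBound_le_expect_matchNum_bipartiteEdges {X Y : Finset V} (hXY : Disjoint X Y) :
    greedyBound #X #Y ≤ 𝔼 S ∈ (bipartiteEdges X Y).powerset, (matchNum S : ℝ) := by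
  induction X using Finset.induction_on generalizing Y with
  | empty =>
    rw [card_empty, greedyBound_zero_left]
    exact expect_nonneg fun S _ => Nat.cast_nonneg _
  | insert x X hx ih =>
    obtain rfl | hY := Y.eq_empty_or_nonempty
    · rw [card_empty, greedyBound_zero_right]
      exact expect_nonneg fun S _ => Nat.cast_nonneg _
    have hxY : x ∉ Y := disjoint_left.1 hXY (mem_insert_self x X)
    have hXY' : Disjoint X Y := hXY.mono_left (subset_insert x X)
    obtain ⟨r, hr⟩ := Nat.exists_eq_add_one_of_ne_zero hY.card_pos.ne'
    set star := Y.image fun y => ({x, y} : Finset V)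
    have hstep : ∀ T ∈ star.powerset, (if T = ∅ then 0 else 1) + greedyBound #X r
        ≤ 𝔼 S ∈ (bipartiteEdges X Y).powerset, (matchNum (T ∪ S) : ℝ) := by
      intro T hT
      obtain ⟨y, hy, hTy⟩ := exists_matchNum_inter_bipartiteEdges_erase_add_le hx hxY hXY' hY
        (mem_powerset.1 hT)
      have hIH := ih (hXY'.mono_right (erase_subset y Y))
      rw [card_erase_of_mem hy, hr, Nat.add_sub_cancel, ← expect_powerset_inter
        (bipartiteEdges_mono subset_rfl (erase_subset y Y))] at hIH
      calc (if T = ∅ then 0 else 1) + greedyBound #X r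
          ≤ 𝔼 S ∈ (bipartiteEdges X Y).powerset,
              ((if T = ∅ then 0 else 1 : ℝ) + matchNum (S ∩ bipartiteEdges X (Y.erase y))) := by
            rw [expect_add_distrib, expect_const (powerset_nonempty _)]
            exact (add_le_add_iff_left _).2 hIH
        _ ≤ _ := expect_le_expect fun S _ => by
            rw [add_comm]
            exact_mod_cast hTy S
    calc greedyBound #(insert x X) #Y
        = 𝔼 T ∈ star.powerset, ((if T = ∅ then 0 else 1) + greedyBound #X r) := by
          rw [expect_add_distrib, expect_powerset_ite_eq_empty,
            card_image_of_injective _ (pair_injective x), expect_const (powerset_nonempty _),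
            card_insert_of_notMem hx, hr, greedyBound_succ_succ]
      _ ≤ 𝔼 T ∈ star.powerset, 𝔼 S ∈ (bipartiteEdges X Y).powerset, (matchNum (T ∪ S) : ℝ) :=
          expect_le_expect hstep
      _ = _ := by
          rw [bipartiteEdges_insert, expect_powerset_union
            (disjoint_image_pair_bipartiteEdges hx hxY)]

lemma min_card_sub_one_le_expect_matchNum_inter_bipartiteEdges {X X' Y Y' : Finset V}
    (hX : X ⊆ X') (hY : Y ⊆ Y') (hXY : Disjoint X Y) :
    ((min #X #Y : ℕ) : ℝ) - 1
      ≤ 𝔼 S ∈ (bipartiteEdges X' Y').powerset, (matchNum (S ∩ bipartiteEdges X Y) : ℝ) := by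
  rw [expect_powerset_inter (bipartiteEdges_mono hX hY) fun u => (matchNum u : ℝ)]
  exact (min_sub_one_le_greedyBound _ _).trans (greedyBound_le_expect_matchNum_bipartiteEdges hXY)

end Bipartite

section Hexagon

variable {V : Type*} [DecidableEq V] {v : Fin 6 → V}

def hexEdge (v : Fin 6 → V) (j : Fin 6) : Finset V := {v j, v (j + 1)}

def hexEdges (v : Fin 6 → V) : Finset (Finset V) := univ.image (hexEdge v)

lemma hexEdge_injective (hv : Function.Injective v) : Function.Injective (hexEdge v) := by
  intro j k h
  rcases pair_eq_pair_iff.1 h with ⟨hjk, -⟩ | ⟨hjk, hkj⟩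
  · exact hv hjk
  · exact absurd ((hv hjk).trans (congrArg (· + 1) (hv hkj).symm))
      ((by decide : ∀ i : Fin 6, i ≠ i + 1 + 1) j)

lemma card_le_of_isMatching_subset_hexEdges (hv : Function.Injective v)
    {M : Finset (Finset V)} (hMH : M ⊆ hexEdges v) (hM : IsMatching M) :
    #M ≤ 2 + (if ({0, 2, 4} : Finset (Fin 6)).image (hexEdge v) ⊆ M then 1 else 0)
      + (if ({1, 3, 5} : Finset (Fin 6)).image (hexEdge v) ⊆ M then 1 else 0) := by
  set s := univ.filter fun j => hexEdge v j ∈ M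
  have hMs : M = s.image (hexEdge v) := by
    ext e
    simp only [s, mem_image, mem_filter, mem_univ, true_and]
    refine ⟨fun he => ?_, fun ⟨j, hj, hje⟩ => hje ▸ hj⟩
    obtain ⟨j, -, rfl⟩ := mem_image.1 (hMH he)
    exact ⟨j, he, rfl⟩
  have himage : ∀ t : Finset (Fin 6), t.image (hexEdge v) ⊆ M ↔ t ⊆ s := fun t => by
    simp [s, subset_iff]
  have hconsec : ∀ j, ¬(j ∈ s ∧ j + 1 ∈ s) := by
    rintro j ⟨hj, hj1⟩
    simp only [s, mem_filter, mem_univ, true_and] at hj hj1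
    have hne : hexEdge v j ≠ hexEdge v (j + 1) := fun h =>
      (by decide : ∀ i : Fin 6, i ≠ i + 1) j (hexEdge_injective hv h)
    exact disjoint_left.1 (hM _ hj _ hj1 hne) (mem_insert_of_mem (mem_singleton_self _))
      (mem_insert_self _ _)
  have hcard : #M = #s := by rw [hMs, card_image_of_injective _ (hexEdge_injective hv)]
  simp only [himage, hcard]
  exact (by decide : ∀ t : Finset (Fin 6), (∀ j, ¬(j ∈ t ∧ j + 1 ∈ t)) →
    #t ≤ 2 + (if {0, 2, 4} ⊆ t then 1 else 0) + (if {1, 3, 5} ⊆ t then 1 else 0)) s hconsec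

lemma matchNum_inter_hexEdges_le (hv : Function.Injective v) (S : Finset (Finset V)) :
    matchNum (S ∩ hexEdges v)
      ≤ 2 + (if ({0, 2, 4} : Finset (Fin 6)).image (hexEdge v) ⊆ S then 1 else 0)
        + (if ({1, 3, 5} : Finset (Fin 6)).image (hexEdge v) ⊆ S then 1 else 0) := by
  obtain ⟨M, hMS, hM, hcard⟩ := exists_isMatching_card_eq_matchNum (S ∩ hexEdges v)
  have hind : ∀ T : Finset (Finset V), (if T ⊆ M then 1 else 0) ≤ if T ⊆ S then 1 else 0 :=
    fun T => by
      by_cases hT : T ⊆ M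
      · rw [if_pos hT, if_pos (hT.trans (hMS.trans inter_subset_left))]
      · rw [if_neg hT]
        exact Nat.zero_le _
  rw [← hcard]
  exact (card_le_of_isMatching_subset_hexEdges hv (hMS.trans inter_subset_right) hM).trans
    (add_le_add (add_le_add le_rfl (hind _)) (hind _))

lemma expect_matchNum_inter_hexEdges_le (hv : Function.Injective v) {G : Finset (Finset V)}
    (hG : hexEdges v ⊆ G) : 𝔼 S ∈ G.powerset, (matchNum (S ∩ hexEdges v) : ℝ) ≤ 9 / 4 := by
  have hsub : ∀ t : Finset (Fin 6), t.image (hexEdge v) ⊆ G := fun t =>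
    (image_subset_image (subset_univ t)).trans hG
  have hcard : ∀ t : Finset (Fin 6), #(t.image (hexEdge v)) = #t := fun t =>
    card_image_of_injective _ (hexEdge_injective hv)
  calc 𝔼 S ∈ G.powerset, (matchNum (S ∩ hexEdges v) : ℝ)
      ≤ 𝔼 S ∈ G.powerset,
          (2 + (if ({0, 2, 4} : Finset (Fin 6)).image (hexEdge v) ⊆ S then 1 else 0)
            + (if ({1, 3, 5} : Finset (Fin 6)).image (hexEdge v) ⊆ S then 1 else 0) : ℝ) :=
        expect_le_expect fun S _ => by exact_mod_cast matchNum_inter_hexEdges_le hv S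
    _ = 9 / 4 := by
        rw [expect_add_distrib, expect_add_distrib, expect_const (powerset_nonempty G),
          expect_powerset_ite_subset (hsub _), expect_powerset_ite_subset (hsub _), hcard, hcard,
          show #({0, 2, 4} : Finset (Fin 6)) = 3 from rfl,
          show #({1, 3, 5} : Finset (Fin 6)) = 3 from rfl]
        norm_num

end Hexagon

section QueriedEdges

variable {m : ℕ}

/-- The queried edges split into `m` vertex-disjoint hexagons
`A i – B i – C i – D i – C (m + i) – B (m + i) – A i`. -/
def hexVertex (m : ℕ) (i : Fin m) : Fin 6 → Vt m :=
  ![Sum.inl (Sum.inl i), Sum.inl (Sum.inr (Fin.castAdd m i)),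
    Sum.inr (Sum.inl (Fin.castAdd m i)), Sum.inr (Sum.inr i),
    Sum.inr (Sum.inl (Fin.natAdd m i)), Sum.inl (Sum.inr (Fin.natAdd m i))]

lemma hexVertex_eq_hexVertex_iff {i i' : Fin m} {a b : Fin 6} :
    hexVertex m i a = hexVertex m i' b ↔ i = i' ∧ a = b := by
  refine ⟨fun h => ?_, fun ⟨hi, hab⟩ => hi ▸ hab ▸ rfl⟩
  fin_cases a <;> fin_cases b <;> simp_all [hexVertex, Fin.ext_iff] <;> omega

lemma hexVertex_injective (i : Fin m) : Function.Injective (hexVertex m i) :=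
  fun _ _ h => (hexVertex_eq_hexVertex_iff.1 h).2

lemma Wq_eq_biUnion_hexEdges (m : ℕ) :
    Wq m = univ.biUnion fun i => hexEdges (hexVertex m i) := by
  ext e
  simp only [Wq, hexEdges, mem_union, mem_image, mem_univ, true_and, mem_biUnion]
  constructor
  · rintro ((((⟨j, rfl⟩ | ⟨i, rfl⟩) | ⟨i, rfl⟩) | ⟨i, rfl⟩) | ⟨i, rfl⟩)
    · induction j using Fin.addCases with
      | left i => exact ⟨i, 1, rfl⟩
      | right i => exact ⟨i, 4, pair_comm _ _⟩
    · exact ⟨i, 0, rfl⟩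
    · exact ⟨i, 5, pair_comm _ _⟩
    · exact ⟨i, 2, rfl⟩
    · exact ⟨i, 3, pair_comm _ _⟩
  · rintro ⟨i, j, rfl⟩
    fin_cases j
    · exact Or.inl (Or.inl (Or.inl (Or.inr ⟨i, rfl⟩)))
    · exact Or.inl (Or.inl (Or.inl (Or.inl ⟨Fin.castAdd m i, rfl⟩)))
    · exact Or.inl (Or.inr ⟨i, rfl⟩)
    · exact Or.inr ⟨i, pair_comm _ _⟩
    · exact Or.inl (Or.inl (Or.inl (Or.inl ⟨Fin.natAdd m i, pair_comm _ _⟩)))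
    · exact Or.inl (Or.inl (Or.inr ⟨i, pair_comm _ _⟩))

lemma hexVertex_mem_hexEdge_iff {i i' : Fin m} {a j : Fin 6} :
    hexVertex m i a ∈ hexEdge (hexVertex m i') j ↔ i = i' ∧ (a = j ∨ a = j + 1) := by
  simp only [hexEdge, mem_insert, mem_singleton, hexVertex_eq_hexVertex_iff]
  tauto

lemma filter_mem_Wq_hexVertex (i : Fin m) (a : Fin 6) :
    (Wq m).filter (hexVertex m i a ∈ ·) = ({a - 1, a} : Finset (Fin 6)).image
      (hexEdge (hexVertex m i)) := by
  ext e
  simp only [mem_filter, Wq_eq_biUnion_hexEdges, mem_biUnion, hexEdges, mem_image, mem_univ,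
    true_and, mem_insert, mem_singleton]
  constructor
  · rintro ⟨⟨i', j, rfl⟩, hae⟩
    obtain ⟨rfl, hj⟩ := hexVertex_mem_hexEdge_iff.1 hae
    refine ⟨j, ?_, rfl⟩
    rcases hj with rfl | rfl
    exacts [Or.inr rfl, Or.inl (add_sub_cancel_right j 1).symm]
  · rintro ⟨j, hj, rfl⟩
    refine ⟨⟨i, j, rfl⟩, hexVertex_mem_hexEdge_iff.2 ⟨rfl, ?_⟩⟩
    rcases hj with rfl | rfl
    exacts [Or.inr (sub_add_cancel a 1).symm, Or.inl rfl]

lemma card_filter_mem_Wq_hexVertex (i : Fin m) (a : Fin 6) :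
    #((Wq m).filter (hexVertex m i a ∈ ·)) = 2 := by
  rw [filter_mem_Wq_hexVertex, card_image_of_injective _
    (hexEdge_injective (hexVertex_injective i))]
  exact card_pair (by simp)

lemma B2C2_eq_image_hexVertex (m : ℕ) :
    B2C2 m = univ.image (hexVertex m · 5) ∪ univ.image (hexVertex m · 4) := rfl

lemma card_B2C2 (m : ℕ) : #(B2C2 m) = m + m := by
  have hinj : ∀ a : Fin 6, Function.Injective (hexVertex m · a) := fun a _ _ h =>
    (hexVertex_eq_hexVertex_iff.1 h).1
  rw [B2C2_eq_image_hexVertex, card_union_of_disjoint, card_image_of_injective _ (hinj 5),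
    card_image_of_injective _ (hinj 4), card_univ, Fintype.card_fin]
  simp [disjoint_left, hexVertex_eq_hexVertex_iff]

lemma expect_card_isolated_B2C2 (m : ℕ) :
    𝔼 S ∈ (Wq m).powerset, (#((B2C2 m).filter fun v => ∀ e ∈ S, v ∉ e) : ℝ) = (m + m) / 4 := by
  have hdeg : ∀ v ∈ B2C2 m, #((Wq m).filter (v ∈ ·)) = 2 := by
    simp only [B2C2_eq_image_hexVertex, mem_union, mem_image, mem_univ, true_and]
    rintro v (⟨i, rfl⟩ | ⟨i, rfl⟩) <;> exact card_filter_mem_Wq_hexVertex i _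
  -- `convert` absorbs the `Fintype`-based decidability instance of the concrete filter
  convert expect_card_filter_forall_notMem (Wq m) (B2C2 m) using 5
  rw [sum_congr rfl fun v hv => by rw [hdeg v hv], sum_const, card_B2C2, nsmul_eq_mul]
  push_cast
  ring

lemma expMatch_Wq_le (m : ℕ) : expMatch (Wq m) (1 / 2) ≤ 9 / 4 * m := by
  rw [expMatch_half]
  calc 𝔼 S ∈ (Wq m).powerset, (matchNum S : ℝ)
      ≤ 𝔼 S ∈ (Wq m).powerset, ∑ i, (matchNum (S ∩ hexEdges (hexVertex m i)) : ℝ) :=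
        expect_le_expect fun S hS => by
          exact_mod_cast matchNum_biUnion_le univ _
            (Wq_eq_biUnion_hexEdges m ▸ mem_powerset.1 hS)
    _ = ∑ i, 𝔼 S ∈ (Wq m).powerset, (matchNum (S ∩ hexEdges (hexVertex m i)) : ℝ) :=
        expect_sum_comm _ _ _
    _ ≤ ∑ _i : Fin m, (9 / 4 : ℝ) := sum_le_sum fun i _ =>
        expect_matchNum_inter_hexEdges_le (hexVertex_injective i)
          (Wq_eq_biUnion_hexEdges m ▸
            subset_biUnion_of_mem (fun i => hexEdges (hexVertex m i)) (mem_univ i))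
    _ = 9 / 4 * m := by simp [mul_comm]

end QueriedEdges

section FullGraph

variable {m : ℕ}

def bcEdge (m : ℕ) (j : Fin (m + m)) : Finset (Vt m) := {Sum.inl (Sum.inr j), Sum.inr (Sum.inl j)}

def bcEdges (m : ℕ) : Finset (Finset (Vt m)) := univ.image (bcEdge m)

def partA (m : ℕ) : Finset (Vt m) := univ.image fun a => Sum.inl (Sum.inl a)

def partB (m : ℕ) : Finset (Vt m) := univ.image fun j => Sum.inl (Sum.inr j)

def partC (m : ℕ) : Finset (Vt m) := univ.image fun j => Sum.inr (Sum.inl j)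

def partD (m : ℕ) : Finset (Vt m) := univ.image fun a => Sum.inr (Sum.inr a)

def freeIdx (m : ℕ) (P : Finset (Finset (Vt m))) : Finset (Fin (m + m)) :=
  univ.filter (bcEdge m · ∉ P)

def freeB (m : ℕ) (P : Finset (Finset (Vt m))) : Finset (Vt m) :=
  (freeIdx m P).image fun j => Sum.inl (Sum.inr j)

def freeC (m : ℕ) (P : Finset (Finset (Vt m))) : Finset (Vt m) :=
  (freeIdx m P).image fun j => Sum.inr (Sum.inl j)

lemma graphE_eq (m : ℕ) : graphE m = bcEdges m ∪ bipartiteEdges (partA m) (partB m)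
    ∪ bipartiteEdges (partC m) (partD m) := by
  ext e
  simp [graphE, bcEdges, bcEdge, bipartiteEdges, partA, partB, partC, partD]

lemma bcEdge_injective : Function.Injective (bcEdge m) := fun j k h => by
  simpa [bcEdge, pair_eq_pair_iff] using h

lemma card_freeIdx {P : Finset (Finset (Vt m))} (hP : P ⊆ bcEdges m) :
    #(freeIdx m P) = m + m - #P := by
  have hPimage : (univ.filter (bcEdge m · ∈ P)).image (bcEdge m) = P := by
    ext e
    simp only [mem_image, mem_filter, mem_univ, true_and]
    refine ⟨fun ⟨j, hj, hje⟩ => hje ▸ hj, fun he => ?_⟩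
    obtain ⟨j, -, rfl⟩ := mem_image.1 (hP he)
    exact ⟨j, he, rfl⟩
  have hcardP : #(univ.filter (bcEdge m · ∈ P)) = #P := by
    rw [← card_image_of_injective _ bcEdge_injective, hPimage]
  have hsplit := card_filter_add_card_filter_not (s := univ) (bcEdge m · ∈ P)
  rw [card_univ, Fintype.card_fin] at hsplit
  rw [freeIdx]
  omega

lemma isMatching_of_subset_bcEdges {P : Finset (Finset (Vt m))} (hP : P ⊆ bcEdges m) :
    IsMatching P := fun e he f hf hef => by
  obtain ⟨j, -, rfl⟩ := mem_image.1 (hP he)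
  obtain ⟨k, -, rfl⟩ := mem_image.1 (hP hf)
  have hkj : k ≠ j := fun h => hef (h ▸ rfl)
  simp [bcEdge, hkj]

lemma exists_eq_of_mem_bipartiteEdges_partA_freeB {P : Finset (Finset (Vt m))}
    {f : Finset (Vt m)} (hf : f ∈ bipartiteEdges (partA m) (freeB m P)) :
    ∃ a j, bcEdge m j ∉ P ∧ f = {Sum.inl (Sum.inl a), Sum.inl (Sum.inr j)} := by
  obtain ⟨x, hx, y, hy, rfl⟩ := mem_bipartiteEdges.1 hf
  simp only [partA, freeB, freeIdx, mem_image, mem_filter, mem_univ, true_and] at hx hy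
  obtain ⟨a, rfl⟩ := hx
  obtain ⟨j, hj, rfl⟩ := hy
  exact ⟨a, j, hj, rfl⟩

lemma exists_eq_of_mem_bipartiteEdges_freeC_partD {P : Finset (Finset (Vt m))}
    {f : Finset (Vt m)} (hf : f ∈ bipartiteEdges (freeC m P) (partD m)) :
    ∃ j a, bcEdge m j ∉ P ∧ f = {Sum.inr (Sum.inl j), Sum.inr (Sum.inr a)} := by
  obtain ⟨x, hx, y, hy, rfl⟩ := mem_bipartiteEdges.1 hf
  simp only [partD, freeC, freeIdx, mem_image, mem_filter, mem_univ, true_and] at hx hy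
  obtain ⟨j, hj, rfl⟩ := hx
  obtain ⟨a, rfl⟩ := hy
  exact ⟨j, a, hj, rfl⟩

/-- The present `B–C` edges, a matching of `A` into the free part of `B` and one of the free
part of `C` into `D` are pairwise vertex-disjoint. -/
lemma card_add_matchNum_add_matchNum_le {P : Finset (Finset (Vt m))} (hP : P ⊆ bcEdges m)
    (U W : Finset (Finset (Vt m))) :
    #P + matchNum (U ∩ bipartiteEdges (partA m) (freeB m P))
      + matchNum (W ∩ bipartiteEdges (freeC m P) (partD m)) ≤ matchNum (P ∪ U ∪ W) := by
  set U' := U ∩ bipartiteEdges (partA m) (freeB m P)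
  set W' := W ∩ bipartiteEdges (freeC m P) (partD m)
  have hmemP : ∀ e ∈ P, ∃ j, bcEdge m j ∈ P ∧ e = bcEdge m j := fun e he => by
    obtain ⟨j, -, rfl⟩ := mem_image.1 (hP he)
    exact ⟨j, he, rfl⟩
  have hmemU : ∀ f ∈ U', _ := fun f hf =>
    exists_eq_of_mem_bipartiteEdges_partA_freeB (mem_inter.1 hf).2
  have hmemW : ∀ f ∈ W', _ := fun f hf =>
    exists_eq_of_mem_bipartiteEdges_freeC_partD (mem_inter.1 hf).2
  have hPU : ∀ e ∈ P, ∀ f ∈ U', Disjoint e f := fun e he f hf => by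
    obtain ⟨j, hj, rfl⟩ := hmemP e he
    obtain ⟨a, k, hk, rfl⟩ := hmemU f hf
    have hkj : k ≠ j := fun h => hk (h ▸ hj)
    simp [bcEdge, hkj]
  have hPUW : ∀ e ∈ P ∪ U', ∀ f ∈ W', Disjoint e f := fun e he f hf => by
    obtain ⟨k, a, hk, rfl⟩ := hmemW f hf
    rcases mem_union.1 he with he | he
    · obtain ⟨j, hj, rfl⟩ := hmemP e he
      have hkj : k ≠ j := fun h => hk (h ▸ hj)
      simp [bcEdge, hkj]
    · obtain ⟨b, j, -, rfl⟩ := hmemU e he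
      simp
  have hne : ∅ ∉ P ∪ U' := fun h => by
    rcases mem_union.1 h with h | h
    · obtain ⟨j, -, hj⟩ := hmemP ∅ h
      exact insert_ne_empty _ _ hj.symm
    · obtain ⟨a, j, -, hj⟩ := hmemU ∅ h
      exact insert_ne_empty _ _ hj.symm
  calc #P + matchNum U' + matchNum W' ≤ matchNum P + matchNum U' + matchNum W' := by
        gcongr
        exact le_matchNum subset_rfl (isMatching_of_subset_bcEdges hP)
    _ ≤ matchNum (P ∪ U') + matchNum W' := by
        gcongr
        exact matchNum_add_matchNum_le (fun h => hne (mem_union_left _ h)) hPU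
    _ ≤ matchNum (P ∪ U' ∪ W') := matchNum_add_matchNum_le hne hPUW
    _ ≤ matchNum (P ∪ U ∪ W) := matchNum_mono
        (union_subset_union (union_subset_union subset_rfl inter_subset_left) inter_subset_left)

lemma card_partA : #(partA m) = m :=
  (card_image_of_injective _ (Sum.inl_injective.comp Sum.inl_injective)).trans (card_fin m)

lemma card_partD : #(partD m) = m :=
  (card_image_of_injective _ (Sum.inr_injective.comp Sum.inr_injective)).trans (card_fin m)

lemma card_freeB {P : Finset (Finset (Vt m))} (hP : P ⊆ bcEdges m) :
    #(freeB m P) = m + m - #P :=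
  (card_image_of_injective _ (Sum.inl_injective.comp Sum.inr_injective)).trans (card_freeIdx hP)

lemma card_freeC {P : Finset (Finset (Vt m))} (hP : P ⊆ bcEdges m) :
    #(freeC m P) = m + m - #P :=
  (card_image_of_injective _ (Sum.inr_injective.comp Sum.inl_injective)).trans (card_freeIdx hP)

lemma le_expect_matchNum_of_subset_bcEdges {P : Finset (Finset (Vt m))} (hP : P ⊆ bcEdges m) :
    (#P : ℝ) + 2 * (((min m (m + m - #P) : ℕ) : ℝ) - 1)
      ≤ 𝔼 U ∈ (bipartiteEdges (partA m) (partB m)).powerset,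
          𝔼 W ∈ (bipartiteEdges (partC m) (partD m)).powerset, (matchNum (P ∪ U ∪ W) : ℝ) := by
  have hB : freeB m P ⊆ partB m := image_subset_image (subset_univ _)
  have hC : freeC m P ⊆ partC m := image_subset_image (subset_univ _)
  have hAB := min_card_sub_one_le_expect_matchNum_inter_bipartiteEdges subset_rfl hB
    (by simp [disjoint_left, partA, freeB] : Disjoint (partA m) (freeB m P))
  have hCD := min_card_sub_one_le_expect_matchNum_inter_bipartiteEdges hC subset_rfl
    (by simp [disjoint_left, partD, freeC] : Disjoint (freeC m P) (partD m))
  rw [card_partA, card_freeB hP] at hAB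
  rw [card_partD, card_freeC hP, min_comm] at hCD
  calc (#P : ℝ) + 2 * (((min m (m + m - #P) : ℕ) : ℝ) - 1)
      ≤ 𝔼 U ∈ (bipartiteEdges (partA m) (partB m)).powerset,
          𝔼 W ∈ (bipartiteEdges (partC m) (partD m)).powerset,
            ((#P : ℝ) + matchNum (U ∩ bipartiteEdges (partA m) (freeB m P))
              + matchNum (W ∩ bipartiteEdges (freeC m P) (partD m))) := by
        simp only [expect_add_distrib, expect_const (powerset_nonempty _)]
        linarith
    _ ≤ _ := expect_le_expect fun U _ => expect_le_expect fun W _ => by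
        exact_mod_cast card_add_matchNum_add_matchNum_le hP U W

lemma card_bcEdges (m : ℕ) : #(bcEdges m) = m + m := by
  rw [bcEdges, card_image_of_injective _ bcEdge_injective, card_univ, Fintype.card_fin]

lemma disjoint_bcEdges_bipartiteEdges (m : ℕ) :
    Disjoint (bcEdges m) (bipartiteEdges (partA m) (partB m)) := by
  simp [disjoint_left, bcEdges, bcEdge, bipartiteEdges, partA, partB, pair_eq_pair_iff]

lemma disjoint_union_bipartiteEdges (m : ℕ) :
    Disjoint (bcEdges m ∪ bipartiteEdges (partA m) (partB m))
      (bipartiteEdges (partC m) (partD m)) := by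
  refine disjoint_left.2 fun e he he' => ?_
  obtain ⟨_, hk, _, hd, rfl⟩ := mem_bipartiteEdges.1 he'
  simp only [partC, partD, mem_image, mem_univ, true_and] at hk hd
  obtain ⟨k, rfl⟩ := hk
  obtain ⟨d, rfl⟩ := hd
  simp [bcEdges, bcEdge, bipartiteEdges, partA, partB, pair_eq_pair_iff] at he

/-- AM-GM: `k - m ≤ (k - m)² / (4c) + c`. -/
lemma sub_sub_sq_div_le_min {c : ℝ} (hc : 0 < c) {k : ℕ} (hk : k ≤ m + m) :
    (m : ℝ) - c - ((k : ℝ) - m) ^ 2 / (4 * c) ≤ (min m (m + m - k) : ℕ) := by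
  have hamgm : (k : ℝ) - m ≤ ((k : ℝ) - m) ^ 2 / (4 * c) + c := by
    rw [div_add' _ _ _ (by positivity), le_div_iff₀ (by positivity)]
    nlinarith [sq_nonneg ((k : ℝ) - m - 2 * c)]
  have hsq : 0 ≤ ((k : ℝ) - m) ^ 2 / (4 * c) := by positivity
  rcases le_total k m with hle | hle
  · rw [Nat.min_eq_left (by omega)]
    linarith
  · rw [Nat.min_eq_right (by omega), Nat.cast_sub hk]
    push_cast
    linarith

/-- The number `k` of present `B–C` edges has mean `m` and variance `m / 2`. -/
lemma three_mul_sub_le_expMatch_graphE (m : ℕ) {c : ℝ} (hc : 0 < c) :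
    3 * m - 2 * c - m / (4 * c) - 2 ≤ expMatch (graphE m) (1 / 2) := by
  have hmean : 𝔼 P ∈ (bcEdges m).powerset, (#P : ℝ) = m := by
    rw [expect_powerset_card, card_bcEdges]
    push_cast
    ring
  have hvar : 𝔼 P ∈ (bcEdges m).powerset, ((#P : ℝ) - m) ^ 2 = m / 2 := by
    have h := expect_powerset_card_sub_sq (K := ℝ) (bcEdges m)
    rw [card_bcEdges] at h
    push_cast at h
    rw [show ((m : ℝ) + m) / 2 = m by ring] at h
    rw [h]
    ring
  rw [expMatch_half, graphE_eq, expect_powerset_union (disjoint_union_bipartiteEdges m),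
    expect_powerset_union (disjoint_bcEdges_bipartiteEdges m)]
  calc 3 * (m : ℝ) - 2 * c - m / (4 * c) - 2
      = 𝔼 P ∈ (bcEdges m).powerset,
          ((#P : ℝ) + 2 * ((m - c - ((#P : ℝ) - m) ^ 2 / (4 * c)) - 1)) := by
        simp only [expect_add_distrib, expect_sub_distrib, ← mul_expect, ← expect_div,
          expect_const (powerset_nonempty _), hmean, hvar]
        field_simp
        ring
    _ ≤ 𝔼 P ∈ (bcEdges m).powerset, ((#P : ℝ) + 2 * (((min m (m + m - #P) : ℕ) : ℝ) - 1)) :=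
        expect_le_expect fun P hP => by
          have hPle : #P ≤ m + m := card_bcEdges m ▸ card_le_card (mem_powerset.1 hP)
          linarith [sub_sub_sq_div_le_min hc hPle]
    _ ≤ _ := expect_le_expect fun P hP =>
        le_expect_matchNum_of_subset_bcEdges (mem_powerset.1 hP)

end FullGraph

open Filter in
lemma eventually_sub_mul_le_expMatch_graphE {δ : ℝ} (hδ : 0 < δ) :
    ∀ᶠ m : ℕ in atTop, (3 - δ) * m ≤ expMatch (graphE m) (1 / 2) := by
  filter_upwards [(tendsto_natCast_atTop_atTop (R := ℝ)).eventually_ge_atTop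
    (2 / δ * (1 / δ + 2))] with m hm
  have hmpos : (0 : ℝ) < m := lt_of_lt_of_le (by positivity) hm
  have hbound := three_mul_sub_le_expMatch_graphE m (c := δ * m / 4) (by positivity)
  have hdiv : (m : ℝ) / (4 * (δ * m / 4)) = 1 / δ := by field_simp
  have hlarge : 1 / δ + 2 ≤ δ / 2 * m := by
    calc 1 / δ + 2 = δ / 2 * (2 / δ * (1 / δ + 2)) := by field_simp
      _ ≤ δ / 2 * m := mul_le_mul_of_nonneg_left hm (by positivity)
  linarith

/-- Since each of the `t = m + m` vertices of `B2 ∪ C2` has only `2` queried incident edges,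
each existing independently with probability `1/2`: (i) the expected number of these
vertices left with no existing queried edge is at least `t/4`; (ii) the expected matching
size produced from the queried edges is at most `(5/4)·t`; while (iii) the omniscient
optimum is at least `(3/2)·t − o(t)`, so (iv) the approximation ratio is at most
`5/6 + o(1)`. -/
theorem stmt12 :
    (∀ m : ℕ,
      (((m : ℝ) + m) / 4 ≤
        ∑ S ∈ (Wq m).powerset,
          (1 / 2 : ℝ) ^ S.card * (1 / 2) ^ ((Wq m).card - S.card) *
            (((B2C2 m).filter (fun v => ∀ e ∈ S, v ∉ e)).card : ℝ)) ∧
      expMatch (Wq m) (1 / 2) ≤ (5 / 4 : ℝ) * ((m : ℝ) + m)) ∧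
    (∀ ε : ℝ, 0 < ε → ∃ M : ℕ, ∀ m : ℕ, M ≤ m →
      (3 / 2 : ℝ) * ((m : ℝ) + m) - ε * ((m : ℝ) + m) ≤ expMatch (graphE m) (1 / 2) ∧
      expMatch (Wq m) (1 / 2) ≤ (5 / 6 + ε) * expMatch (graphE m) (1 / 2)) := by
  refine ⟨fun m => ⟨?_, ?_⟩, fun ε hε => ?_⟩
  · rw [sum_powerset_half_weight, expect_card_isolated_B2C2]
  · linarith [expMatch_Wq_le m, (Nat.cast_nonneg m : (0 : ℝ) ≤ m)]
  obtain ⟨M, hM⟩ := Filter.eventually_atTop.1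
    ((eventually_sub_mul_le_expMatch_graphE (mul_pos two_pos hε)).and
      (eventually_sub_mul_le_expMatch_graphE (by norm_num : (0 : ℝ) < 3 / 10)))
  refine ⟨M, fun m hm => ?_⟩
  obtain ⟨hε_bound, hfixed⟩ := hM m hm
  have hE : 0 ≤ expMatch (graphE m) (1 / 2) := le_trans (by positivity) hfixed
  refine ⟨by linarith, ?_⟩
  calc expMatch (Wq m) (1 / 2) ≤ 9 / 4 * m := expMatch_Wq_le m
    _ = 5 / 6 * ((3 - 3 / 10) * m) := by ring
    _ ≤ 5 / 6 * expMatch (graphE m) (1 / 2) := by gcongr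
    _ ≤ (5 / 6 + ε) * expMatch (graphE m) (1 / 2) := by gcongr; linarith
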